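/- arXiv:2103.03307 — 2 statements merged into one kernel-verified Lean document; each statement's English description precedes it below -/
import Mathlib

section
/- The balance heuristic multiple importance sampling estimator is unbiased: given probability measures Q_1,...,Q_K with densities q_1,...,q_K, a target measure P with density p absolutely continuous w.r.t. each Q_k, and N_k i.i.d. samples z_{1k},...,z_{N_k k} from each Q_k (all mutually independent), the expectation of Σ_{k=1}^K Σ_{i=1}^{N_k} p(z_{ik}) f(z_{ik}) / (Σ_{j=1}^K N_j q_j(z_{ik})) equals E_{z∼P}[f(z)]. -/
open MeasureTheory
open scoped ENNReal NNReal

/-!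
Each sample `z k i ∼ Q k` contributes `∫ p f / S dQ_k = ∫ q_k p f / S dμ0`, where
`S = ∑ j, N j q_j` is the balance heuristic denominator. Summing `N k` copies over `k` gives
`∫ S · (p f / S) dμ0 = ∫ p f dμ0 = ∫ f dP`; the cancellation is valid because `p` vanishes a.e.
where `S` does, as `P ≪ Q k`. Integrability comes from `q k ≤ S` and the boundedness of `f`.
-/

lemma abs_div_mul_le_abs {w s : ℝ} (hw : 0 ≤ w) (hws : w ≤ s) (y : ℝ) : |y / s * w| ≤ |y| := by
  calc |y / s * w| = |y| * (w / s) := by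
        rw [abs_mul, abs_div, abs_of_nonneg hw, abs_of_nonneg (hw.trans hws)]; ring
    _ ≤ |y| := mul_le_of_le_one_right (abs_nonneg y) (div_le_one_of_le₀ hws (hw.trans hws))

namespace MeasureTheory

section WithDensity

variable {α : Type*} [MeasurableSpace α] {μ : Measure α} {f g : α → ℝ≥0∞}

lemma lintegral_ne_top_of_isFiniteMeasure_withDensity [IsFiniteMeasure (μ.withDensity f)] :
    ∫⁻ x, f x ∂μ ≠ ∞ := by
  simpa [withDensity_apply _ MeasurableSet.univ] using measure_ne_top (μ.withDensity f) .univ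

lemma ae_lt_top_of_isFiniteMeasure_withDensity [IsFiniteMeasure (μ.withDensity f)]
    (hf : AEMeasurable f μ) : ∀ᵐ x ∂μ, f x < ∞ :=
  ae_lt_top' hf lintegral_ne_top_of_isFiniteMeasure_withDensity

lemma integrable_toReal_of_isFiniteMeasure_withDensity [IsFiniteMeasure (μ.withDensity f)]
    (hf : AEMeasurable f μ) : Integrable (fun x => (f x).toReal) μ :=
  integrable_toReal_of_lintegral_ne_top hf lintegral_ne_top_of_isFiniteMeasure_withDensity

lemma ae_eq_zero_of_withDensity_absolutelyContinuous (hf : AEMeasurable f μ)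
    (hg : AEMeasurable g μ) (hfg : μ.withDensity f ≪ μ.withDensity g) :
    ∀ᵐ x ∂μ, g x = 0 → f x = 0 := by
  have hg_null : μ.withDensity g {x | g x = 0} = 0 := by
    rw [withDensity_apply_eq_zero' hg, ← Set.ofPred_and]
    simp
  have hf_null := (withDensity_apply_eq_zero' hf).1 (hfg hg_null)
  rw [ae_iff]
  simpa [Set.inter_comm, ← Set.ofPred_and] using hf_null

lemma sum_mul_integral_withDensity {ι : Type*} [Fintype ι] {q : ι → α → ℝ≥0∞}
    (hq : ∀ k, Measurable (q k)) (hq_fin : ∀ k, ∀ᵐ x ∂μ, q k x < ∞) (c : ι → ℝ) {h : α → ℝ}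
    (hh : ∀ k, Integrable h (μ.withDensity (q k))) :
    ∑ k, c k * ∫ x, h x ∂(μ.withDensity (q k)) = ∫ x, (∑ k, c k * (q k x).toReal) * h x ∂μ := by
  have hh' k : Integrable (fun x => h x * (q k x).toReal) μ :=
    (integrable_withDensity_iff (hq k) (hq_fin k)).1 (hh k)
  simp_rw [integral_withDensity_eq_integral_toReal_smul (hq _) (hq_fin _), smul_eq_mul,
    ← integral_const_mul]
  rw [← integral_finsetSum _ fun k _ => ?_]
  · simp_rw [Finset.sum_mul, mul_assoc]
  · simpa only [mul_comm] using (hh' k).const_mul (c k)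

end WithDensity

lemma Integrable.div_mul_of_le {α : Type*} [MeasurableSpace α] {μ : Measure α}
    {y s w : α → ℝ} (hy : Integrable y μ) (hs : AEStronglyMeasurable s μ)
    (hw : AEStronglyMeasurable w μ) (hw0 : ∀ x, 0 ≤ w x) (hws : ∀ x, w x ≤ s x) :
    Integrable (fun x => y x / s x * w x) μ :=
  hy.mono ((hy.aestronglyMeasurable.div₀ hs).mul hw)
    (ae_of_all _ fun x => by
      simpa only [Real.norm_eq_abs] using abs_div_mul_le_abs (hw0 x) (hws x) (y x))

section Samples

variable {ι : Type*} [Fintype ι] {n : ι → Type*} [∀ k, Fintype (n k)]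
  {Z : Type*} [MeasurableSpace Z] (Q : ι → Measure Z) [∀ k, IsProbabilityMeasure (Q k)]

lemma integral_comp_eval_eval_pi_pi {k : ι} (i : n k) {g : Z → ℝ}
    (hg : AEStronglyMeasurable g (Q k)) :
    ∫ z : (k : ι) → n k → Z, g (z k i) ∂(Measure.pi fun k => Measure.pi fun _ : n k => Q k)
      = ∫ x, g x ∂(Q k) := by
  have hgi : AEStronglyMeasurable (fun y : n k → Z => g (y i)) (Measure.pi fun _ => Q k) :=
    hg.comp_measurePreserving (measurePreserving_eval _ i)
  rw [integral_comp_eval (μ := fun k => Measure.pi fun _ : n k => Q k) hgi, integral_comp_eval hg]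

lemma integral_sum_sum_comp_eval_pi_pi {g : Z → ℝ} (hg : ∀ k, Integrable g (Q k)) :
    ∫ z : (k : ι) → n k → Z, ∑ k, ∑ i, g (z k i)
        ∂(Measure.pi fun k => Measure.pi fun _ : n k => Q k)
      = ∑ k, (Fintype.card (n k) : ℝ) * ∫ x, g x ∂(Q k) := by
  have hint (k : ι) (i : n k) := integrable_comp_eval (μ := fun k => Measure.pi fun _ : n k => Q k)
    (integrable_comp_eval (μ := fun _ : n k => Q k) (i := i) (hg k))
  rw [integral_finsetSum _ fun k _ => integrable_finsetSum _ fun i _ => hint k i]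
  refine Finset.sum_congr rfl fun k _ => ?_
  rw [integral_finsetSum _ fun i _ => hint k i]
  simp [integral_comp_eval_eval_pi_pi Q _ (hg k).aestronglyMeasurable]

end Samples

end MeasureTheory

/-- The balance heuristic multiple importance sampling estimator is unbiased. -/
theorem bh_mis_estimator_unbiased
    {Z : Type*} [MeasurableSpace Z] (μ0 : Measure Z)
    (K : ℕ) (hK : 1 ≤ K)
    (p : Z → ℝ≥0∞) (q : Fin K → Z → ℝ≥0∞)
    (hp : Measurable p) (hq : ∀ k, Measurable (q k))
    (P : Measure Z) (Q : Fin K → Measure Z)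
    (hP : P = μ0.withDensity p) (hQ : ∀ k, Q k = μ0.withDensity (q k))
    [IsProbabilityMeasure P] [∀ k, IsProbabilityMeasure (Q k)]
    (hPQ : ∀ k, P ≪ Q k)
    (f : Z → ℝ) (hf : Measurable f) (C : ℝ) (hfb : ∀ z, |f z| ≤ C)
    (N : Fin K → ℕ) (hN : ∀ k, 1 ≤ N k) :
    ∫ z : (k : Fin K) → Fin (N k) → Z,
        ∑ k : Fin K, ∑ i : Fin (N k),
          ((p (z k i)).toReal * f (z k i)) /
            (∑ j : Fin K, (N j : ℝ) * (q j (z k i)).toReal)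
      ∂(Measure.pi fun k : Fin K => Measure.pi fun _ : Fin (N k) => Q k)
      = ∫ z, f z ∂P := by
  subst hP
  obtain rfl : Q = fun k => μ0.withDensity (q k) := funext hQ
  set S : Z → ℝ := fun x => ∑ j, (N j : ℝ) * (q j x).toReal
  have hq_fin k : ∀ᵐ x ∂μ0, q k x < ∞ :=
    ae_lt_top_of_isFiniteMeasure_withDensity (hq k).aemeasurable
  have hq_le_S k x : (q k x).toReal ≤ S x :=
    calc (q k x).toReal ≤ N k * (q k x).toReal :=
          le_mul_of_one_le_left ENNReal.toReal_nonneg (by exact_mod_cast hN k)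
      _ ≤ S x := Finset.single_le_sum (f := fun j => (N j : ℝ) * (q j x).toReal)
          (fun j _ => by positivity) (Finset.mem_univ k)
  have hpf : Integrable (fun x => (p x).toReal * f x) μ0 :=
    (integrable_toReal_of_isFiniteMeasure_withDensity hp.aemeasurable).mul_bdd
      hf.aestronglyMeasurable (ae_of_all _ hfb)
  have hS : Measurable S := by fun_prop
  have hg k : Integrable (fun x => (p x).toReal * f x / S x) (μ0.withDensity (q k)) :=
    (integrable_withDensity_iff (hq k) (hq_fin k)).2 <|
      hpf.div_mul_of_le hS.aestronglyMeasurable (hq k).ennreal_toReal.aestronglyMeasurable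
        (fun _ => ENNReal.toReal_nonneg) (hq_le_S k)
  -- `S x = 0` forces `q k₀ x = 0`, and there `p` vanishes a.e. since `P ≪ Q k₀`
  have hS_ne_zero : ∀ᵐ x ∂μ0, S x = 0 → p x = 0 := by
    let k₀ : Fin K := ⟨0, hK⟩
    filter_upwards [hq_fin k₀, ae_eq_zero_of_withDensity_absolutelyContinuous hp.aemeasurable
      (hq k₀).aemeasurable (hPQ k₀)] with x hx_fin hx_zero hSx
    refine hx_zero (((ENNReal.toReal_eq_zero_iff _).1 ?_).resolve_right hx_fin.ne)
    exact le_antisymm (hSx ▸ hq_le_S k₀ x) ENNReal.toReal_nonneg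
  calc _ = ∑ k, (N k : ℝ) * ∫ x, (p x).toReal * f x / S x ∂(μ0.withDensity (q k)) := by
        simpa using integral_sum_sum_comp_eval_pi_pi (n := fun k => Fin (N k)) _ hg
    _ = ∫ x, S x * ((p x).toReal * f x / S x) ∂μ0 :=
        sum_mul_integral_withDensity hq hq_fin _ hg
    _ = ∫ x, (p x).toReal * f x ∂μ0 := integral_congr_ae <| by
        filter_upwards [hS_ne_zero] with x hx
        by_cases hSx : S x = 0
        · simp [hSx, hx hSx]
        · exact mul_div_cancel₀ _ hSx
    _ = ∫ x, f x ∂(μ0.withDensity p) :=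
        (integral_withDensity_eq_integral_toReal_smul hp
          (ae_lt_top_of_isFiniteMeasure_withDensity hp.aemeasurable) f).symm
end

section
/- Combination of the two cases in the baseline-count bound: for reals Δ_k > 0, Δ_b > 0, α ∈ (0,1], μ_b > 0 and L > 0, let a_k = (1−α)μ_b − μ_k where μ_k = μ* − Δ_k and Δ_b = μ* − μ_b (so a_k = Δ_k − Δ_b − α μ_b). Then for any n ≥ 0: (i) if a_k > 0 and n ≤ L/Δ_k², then a_k·n + √(L·n) ≤ 2L/Δ_k; (ii) if a_k ≤ 0 then a_k·n + √(L·n) ≤ L/(4(Δ_b + αμ_b − Δ_k)) when Δ_b + αμ_b − Δ_k > 0. -/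
/-! Case (i): `a_k ≤ Δ_k`, so both `a_k n` and `√(L n)` are at most `L / Δ_k` once `n ≤ L / Δ_k²`.
Case (ii): `a_k = -c` with `c = Δ_b + α μ_b − Δ_k`, and AM-GM gives `√(L n) ≤ c n + L / (4 c)`. -/

namespace Real

lemma sqrt_mul_le_div_of_le_div_sq {L n Δ : ℝ} (hΔ : 0 < Δ) (hL : 0 ≤ L) (h : n ≤ L / Δ ^ 2) :
    √(L * n) ≤ L / Δ := by
  refine sqrt_le_iff.mpr ⟨by positivity, ?_⟩
  calc L * n ≤ L * (L / Δ ^ 2) := mul_le_mul_of_nonneg_left h hL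
    _ = (L / Δ) ^ 2 := by ring

lemma sqrt_mul_le_mul_add_div {L n c : ℝ} (hc : 0 < c) (hL : 0 ≤ L) (hn : 0 ≤ n) :
    √(L * n) ≤ c * n + L / (4 * c) := by
  refine sqrt_le_iff.mpr ⟨by positivity, ?_⟩
  have hsq : (c * n + L / (4 * c)) ^ 2 - L * n = (c * n - L / (4 * c)) ^ 2 := by
    field_simp
    ring
  linarith [sq_nonneg (c * n - L / (4 * c))]

lemma mul_add_sqrt_mul_le_of_le_div_sq {a L n Δ : ℝ} (ha : a ≤ Δ) (hΔ : 0 < Δ) (hL : 0 ≤ L)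
    (hn : 0 ≤ n) (h : n ≤ L / Δ ^ 2) :
    a * n + √(L * n) ≤ 2 * L / Δ := by
  have hlin : a * n ≤ L / Δ :=
    calc a * n ≤ Δ * n := mul_le_mul_of_nonneg_right ha hn
      _ ≤ Δ * (L / Δ ^ 2) := mul_le_mul_of_nonneg_left h hΔ.le
      _ = L / Δ := by field_simp
  calc a * n + √(L * n) ≤ L / Δ + L / Δ := add_le_add hlin (sqrt_mul_le_div_of_le_div_sq hΔ hL h)
    _ = 2 * L / Δ := by ring

end Real

theorem baseline_count_two_cases_general
    (μstar μb μk α L n : ℝ)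
    (hΔk : 0 < μstar - μk) (hΔb : 0 ≤ μstar - μb)
    (hα0 : 0 < α) (hμb : 0 < μb) (hL : 0 < L) (hn : 0 ≤ n) :
    ((1 - α) * μb - μk > 0 → n ≤ L / (μstar - μk) ^ 2 →
      ((1 - α) * μb - μk) * n + Real.sqrt (L * n) ≤ 2 * L / (μstar - μk)) ∧
    ((1 - α) * μb - μk ≤ 0 → (μstar - μb) + α * μb - (μstar - μk) > 0 →
      ((1 - α) * μb - μk) * n + Real.sqrt (L * n)
        ≤ L / (4 * ((μstar - μb) + α * μb - (μstar - μk)))) := by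
  refine ⟨fun _ hnle => ?_, fun _ hc => ?_⟩
  · have ha : (1 - α) * μb - μk ≤ μstar - μk := by nlinarith
    exact Real.mul_add_sqrt_mul_le_of_le_div_sq ha hΔk hL.le hn hnle
  · have ha : (1 - α) * μb - μk = -((μstar - μb) + α * μb - (μstar - μk)) := by ring
    rw [ha]
    linarith [Real.sqrt_mul_le_mul_add_div hc hL.le hn]

/-- Combination of the two cases in the baseline-count bound. With
`Δ_k = μ* − μ_k`, `Δ_b = μ* − μ_b` and `a_k = (1−α)μ_b − μ_k`:
(i) if `a_k > 0` and `n ≤ L/Δ_k²` then `a_k n + √(Ln) ≤ 2L/Δ_k`;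
(ii) if `a_k ≤ 0` and `Δ_b + αμ_b − Δ_k > 0` then
`a_k n + √(Ln) ≤ L/(4(Δ_b + αμ_b − Δ_k))`. -/
theorem baseline_count_two_cases
    (μstar μb μk α L n : ℝ)
    (hΔk : 0 < μstar - μk) (hΔb : 0 ≤ μstar - μb)
    (hα0 : 0 < α) (hα1 : α ≤ 1) (hμb : 0 < μb) (hL : 0 < L) (hn : 0 ≤ n) :
    ((1 - α) * μb - μk > 0 → n ≤ L / (μstar - μk) ^ 2 →
      ((1 - α) * μb - μk) * n + Real.sqrt (L * n) ≤ 2 * L / (μstar - μk)) ∧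
    ((1 - α) * μb - μk ≤ 0 → (μstar - μb) + α * μb - (μstar - μk) > 0 →
      ((1 - α) * μb - μk) * n + Real.sqrt (L * n)
        ≤ L / (4 * ((μstar - μb) + α * μb - (μstar - μk)))) :=
  baseline_count_two_cases_general μstar μb μk α L n hΔk hΔb hα0 hμb hL hn
end
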